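/- Let q = (q_1, ..., q_t) be a sequence of access requests to logical blocks, and let leaf assignments be resampled uniformly and independently after each access. Then for any two request sequences q and q' of the same length t, the distributions of the observed leaf-identifier transcripts are identical; hence the statistical distance between the server's views (of leaf identifiers) is 0. -/
import Mathlib


instance (L : ℕ) : NeZero (2 ^ L) := ⟨(pow_pos (by norm_num : (0:ℕ) < 2) L).ne'⟩

/-- The server's observed transcript of leaf identifiers for a sequence of
block requests: at each step the server observes the leaf currently
assigned to the requested block, after which the block is reassigned a
fresh uniformly random leaf in `{0, …, 2^L - 1}`, independently. -/
noncomputable def oramTranscript {B : Type} [DecidableEq B] (L : ℕ) :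
    (B → Fin (2 ^ L)) → List B → PMF (List (Fin (2 ^ L)))
  | _, [] => PMF.pure []
  | pos, b :: bs =>
      (PMF.uniformOfFintype (Fin (2 ^ L))).bind fun newLeaf =>
        (oramTranscript L (Function.update pos b newLeaf) bs).map
          (fun t => pos b :: t)

/-- The server's view for request sequence `q`: initial leaf assignments
are i.i.d. uniform, and all reassignments are i.i.d. uniform. -/
noncomputable def serverView {B : Type} [DecidableEq B] [Fintype B]
    (L : ℕ) (reqs : List B) : PMF (List (Fin (2 ^ L))) :=
  (PMF.uniformOfFintype (B → Fin (2 ^ L))).bind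
    (fun pos => oramTranscript L pos reqs)


/-- The bijection `(pos, nl) ↦ (pos b, update pos b nl)`. -/
def swapEquiv {B : Type} [DecidableEq B] (N : ℕ) (b : B) :
    ((B → Fin N) × Fin N) ≃ (Fin N × (B → Fin N)) where
  toFun p := (p.1 b, Function.update p.1 b p.2)
  invFun q := (Function.update q.2 b q.1, q.2 b)
  left_inv p := by
    simp [Function.update_idem, Function.update_eq_self]
  right_inv q := by
    simp [Function.update_idem, Function.update_eq_self]

lemma swap_bind {B : Type} [DecidableEq B] [Fintype B] [Nonempty B]
    (L : ℕ) (b : B) (g : Fin (2^L) → (B → Fin (2^L)) → PMF (List (Fin (2^L)))) :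
    (PMF.uniformOfFintype (B → Fin (2^L))).bind (fun pos =>
      (PMF.uniformOfFintype (Fin (2^L))).bind (fun nl =>
        g (pos b) (Function.update pos b nl))) =
    (PMF.uniformOfFintype (Fin (2^L))).bind (fun v =>
      (PMF.uniformOfFintype (B → Fin (2^L))).bind (fun f => g v f)) := by
  ext y
  simp only [PMF.bind_apply, PMF.uniformOfFintype_apply, ENNReal.tsum_mul_left]
  rw [← ENNReal.tsum_prod, ← ENNReal.tsum_prod]
  rw [← (swapEquiv (2^L) b).tsum_eq (fun q : Fin (2^L) × (B → Fin (2^L)) => g q.1 q.2 y)]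
  rw [mul_left_comm]
  rfl

lemma serverView_eq_of_length {B : Type} [DecidableEq B] [Fintype B] [Nonempty B]
    (L : ℕ) : ∀ (reqs reqs' : List B), reqs.length = reqs'.length →
    serverView L reqs = serverView L reqs' := by
  intro reqs
  induction reqs with
  | nil => intro reqs' h; cases reqs' with
    | nil => rfl
    | cons => simp at h
  | cons b bs ih =>
    intro reqs' h
    cases reqs' with
    | nil => simp at h
    | cons b' bs' =>
      simp only [List.length_cons, Nat.succ.injEq] at h
      have key : ∀ (c : B) (cs : List B),
          serverView L (c :: cs) =
          (PMF.uniformOfFintype (Fin (2^L))).bind (fun v =>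
            (serverView L cs).map (fun t => v :: t)) := by
        intro c cs
        unfold serverView
        show (PMF.uniformOfFintype (B → Fin (2^L))).bind (fun pos =>
          (PMF.uniformOfFintype (Fin (2^L))).bind (fun nl =>
            (oramTranscript L (Function.update pos c nl) cs).map (fun t => pos c :: t))) = _
        rw [swap_bind L c (fun v f => (oramTranscript L f cs).map (fun t => v :: t))]
        congr 1
        ext v : 1
        rw [PMF.map_bind]
      rw [key, key, ih bs' h]

/-- **Perfect indistinguishability of access sequences.**
Let `q = (q₁, …, q_t)` and `q' = (q'₁, …, q'_t)` be any two sequences of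
access requests to logical blocks of the same length `t`, with leaf
assignments resampled uniformly and independently after each access (and
initial assignments i.i.d. uniform).  Then the distributions of the
observed leaf-identifier transcripts are identical; hence the statistical
distance `(1/2)·Σₐ |μ(a) − ν(a)|` between the server's views is `0`. -/
theorem stmt_14 {B : Type} [DecidableEq B] [Fintype B] [Nonempty B]
    (L : ℕ) (reqs reqs' : List B) (hlen : reqs.length = reqs'.length) :
    serverView L reqs = serverView L reqs' ∧
    (2 : ENNReal)⁻¹ *
        (∑' a : List (Fin (2 ^ L)),
          ((serverView L reqs a - serverView L reqs' a) +
            (serverView L reqs' a - serverView L reqs a))) = 0 := by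
  have h := serverView_eq_of_length L reqs reqs' hlen
  refine ⟨h, ?_⟩
  rw [h]
  simp
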